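/- arXiv:1404.4674 — 3 statements merged into one kernel-verified Lean document; each statement's English description precedes it below -/
import Mathlib

section
/- For every permutation w of {1,…,n}, the minimum of Σ_{s=1}^k (j_s − i_s) over all factorizations w = (i₁ j₁)(i₂ j₂)⋯(i_k j_k) of w into a product of transpositions (i_s j_s) with i_s < j_s equals Σ_{i : w(i) > i} (w(i) − i). -/
/-!
The truncated displacement `dep w = ∑ᵢ (w(i) - i)₊` is subadditive under composition and equals
`j - i` on a transposition `(i j)`, so no factorization costs less than `dep w`. Conversely, let `d`
be the largest point moved by `w`; both `c = w(d)` and `a = w⁻¹(d)` lie below `d`, and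
`w * (a d) = (d c) * w` fixes `d`. Splitting off `(c d)` on the left when `a ≤ c`, and `(a d)` on
the right when `c ≤ a`, lowers the depth by exactly the cost of that transposition, so induction on
the depth yields a factorization of cost `dep w`.
-/

/-- The depth of a permutation `w` of `{1,…,n}`:
`dep(w) = ∑_{i : w(i) > i} (w(i) - i)`. -/
def dep {n : ℕ} (w : Equiv.Perm (Fin n)) : ℕ :=
  ∑ i ∈ Finset.univ.filter (fun i : Fin n => i < w i), ((w i : ℕ) - (i : ℕ))

open Equiv Finset

namespace Equiv.Perm

variable {α : Type*} [LinearOrder α] [Fintype α]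

theorem apply_lt_of_forall_mem_support_le {w : Perm α} {d : α} (hd : d ∈ w.support)
    (hmax : ∀ i ∈ w.support, i ≤ d) : w d < d := by
  rw [mem_support] at hd
  refine lt_of_le_of_ne (hmax _ ?_) hd
  rw [mem_support, Ne, EmbeddingLike.apply_eq_iff_eq]
  exact hd

end Equiv.Perm

section Depth

variable {n : ℕ}

theorem dep_eq_sum_tsub (w : Perm (Fin n)) : dep w = ∑ i, ((w i : ℕ) - i) := by
  refine sum_filter_of_ne fun i _ h => ?_
  rw [Fin.lt_def]
  omega

theorem dep_one : dep (1 : Perm (Fin n)) = 0 := by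
  simp [dep_eq_sum_tsub]

theorem dep_mul_le (u v : Perm (Fin n)) : dep (u * v) ≤ dep u + dep v := by
  simp only [dep_eq_sum_tsub]
  calc ∑ i, (((u * v) i : ℕ) - i)
      ≤ ∑ i, (((u (v i) : ℕ) - v i) + ((v i : ℕ) - i)) :=
        sum_le_sum fun i _ => by rw [Perm.mul_apply]; omega
    _ = ∑ i, ((u i : ℕ) - i) + ∑ i, ((v i : ℕ) - i) := by
        rw [sum_add_distrib, Equiv.sum_comp v fun j => (u j : ℕ) - j]

theorem dep_swap {a b : Fin n} (h : a < b) : dep (swap a b) = (b : ℕ) - a := by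
  rw [dep_eq_sum_tsub, sum_eq_single_of_mem a (mem_univ a), swap_apply_left]
  intro i _ hia
  rcases eq_or_ne i b with rfl | hib
  · rw [swap_apply_right]
    exact Nat.sub_eq_zero_of_le (Fin.le_def.mp h.le)
  · rw [swap_apply_of_ne_of_ne hia hib, Nat.sub_self]

theorem dep_list_prod_le (l : List (Fin n × Fin n)) (h : ∀ x ∈ l, x.1 < x.2) :
    dep (l.map fun x => swap x.1 x.2).prod ≤ (l.map fun x => (x.2 : ℕ) - x.1).sum := by
  induction l with
  | nil => simp [dep_one]
  | cons x l ih =>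
    simp only [List.map_cons, List.prod_cons, List.sum_cons]
    calc dep (swap x.1 x.2 * (l.map fun x => swap x.1 x.2).prod)
        ≤ dep (swap x.1 x.2) + dep (l.map fun x => swap x.1 x.2).prod := dep_mul_le _ _
      _ ≤ _ := by
        rw [dep_swap (h x List.mem_cons_self)]
        exact Nat.add_le_add_left (ih fun y hy => h y (List.mem_cons_of_mem _ hy)) _

/-- Right multiplication by `(a d)` moves the value `d` from `a` to `d` and the value `c = w d`
from `d` to `a`; only the summand at `a` changes, from `d - a` to `(c - a)₊`. -/
theorem dep_add_eq_dep_mul_swap_add {w : Perm (Fin n)} {a d : Fin n} (ha : w a = d)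
    (hd : w d < d) : dep w + ((w d : ℕ) - a) = dep (w * swap a d) + ((d : ℕ) - a) := by
  have hrest : ∀ i ∈ univ.erase a, ((w * swap a d) i : ℕ) - i = (w i : ℕ) - i := by
    intro i hi
    rw [Perm.mul_apply]
    rcases eq_or_ne i d with rfl | hid
    · rw [swap_apply_right, ha, Nat.sub_self, Nat.sub_eq_zero_of_le (Fin.le_def.mp hd.le)]
    · rw [swap_apply_of_ne_of_ne (ne_of_mem_erase hi) hid]
  rw [dep_eq_sum_tsub, dep_eq_sum_tsub, ← add_sum_erase _ _ (mem_univ a),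
    ← add_sum_erase _ _ (mem_univ a), sum_congr rfl hrest, Perm.mul_apply, swap_apply_left, ha]
  omega

theorem exists_swap_factor_of_ne_one {w : Perm (Fin n)} (hw : w ≠ 1) :
    ∃ a b : Fin n, a < b ∧ ∃ w' : Perm (Fin n), dep w = dep w' + ((b : ℕ) - a) ∧
      (w = swap a b * w' ∨ w = w' * swap a b) := by
  have hs : w.support.Nonempty := nonempty_iff_ne_empty.mpr (Perm.support_eq_empty_iff.not.mpr hw)
  set d := w.support.max' hs
  have hmax : ∀ i ∈ w.support, i ≤ d := fun i hi => le_max' _ i hi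
  have hc : w d < d := Perm.apply_lt_of_forall_mem_support_le (max'_mem _ hs) hmax
  have ha : w⁻¹ d < d := by
    rw [← Perm.support_inv] at hmax
    exact Perm.apply_lt_of_forall_mem_support_le (by simpa using max'_mem _ hs) hmax
  have hwa : w (w⁻¹ d) = d := w.apply_symm_apply d
  have hdep := dep_add_eq_dep_mul_swap_add hwa hc
  have hconj : w * swap (w⁻¹ d) d = swap d (w d) * w := by
    rw [mul_swap_eq_swap_mul, hwa]
  rcases le_total (w⁻¹ d) (w d) with hac | hca
  · refine ⟨w d, d, hc, w * swap (w⁻¹ d) d, ?_, Or.inl ?_⟩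
    · have := Fin.le_def.mp hac
      have := Fin.lt_def.mp hc
      omega
    · rw [hconj, swap_comm, ← mul_assoc, swap_mul_self, one_mul]
  · refine ⟨w⁻¹ d, d, ha, w * swap (w⁻¹ d) d, ?_, Or.inr ?_⟩
    · have := Fin.le_def.mp hca
      omega
    · rw [mul_assoc, swap_mul_self, mul_one]

theorem exists_swap_list_cost_eq_dep (w : Perm (Fin n)) :
    ∃ l : List (Fin n × Fin n), (∀ x ∈ l, x.1 < x.2) ∧
      (l.map fun x => swap x.1 x.2).prod = w ∧ dep w = (l.map fun x => (x.2 : ℕ) - x.1).sum := by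
  induction hm : dep w using Nat.strong_induction_on generalizing w with
  | _ m ih =>
  subst hm
  rcases eq_or_ne w 1 with rfl | hw
  · exact ⟨[], by simp, rfl, dep_one⟩
  obtain ⟨a, b, hab, w', hdep, hfac⟩ := exists_swap_factor_of_ne_one hw
  have hcost : 0 < (b : ℕ) - a := Nat.sub_pos_of_lt hab
  obtain ⟨l, hl, hprod, hsum⟩ := ih (dep w') (by omega) w' rfl
  rcases hfac with rfl | rfl
  · refine ⟨(a, b) :: l, ?_, ?_, ?_⟩
    · simpa [hab] using hl
    · simp [hprod]
    · simp [hdep, hsum, add_comm]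
  · refine ⟨l ++ [(a, b)], ?_, ?_, ?_⟩
    · simpa [hab, or_imp, forall_and] using hl
    · simp [hprod]
    · simp [hdep, hsum]

end Depth

/-- The minimum of `∑_s (j_s - i_s)` over all factorizations
`w = (i₁ j₁)(i₂ j₂)⋯(i_k j_k)` of `w` into transpositions `(i_s j_s)` with
`i_s < j_s` equals `dep(w) = ∑_{i : w(i) > i} (w(i) - i)`. -/
theorem depth_is_min_transposition_cost (n : ℕ) (w : Equiv.Perm (Fin n)) :
    IsLeast
      {m : ℕ | ∃ l : List (Fin n × Fin n),
        (∀ x ∈ l, x.1 < x.2) ∧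
        (l.map (fun x => Equiv.swap x.1 x.2)).prod = w ∧
        m = (l.map (fun x => (x.2 : ℕ) - (x.1 : ℕ))).sum}
      (dep w) := by
  refine ⟨exists_swap_list_cost_eq_dep w, ?_⟩
  rintro m ⟨l, hl, rfl, rfl⟩
  exact dep_list_prod_le l hl
end

section
/- For every n ≥ 1, the number of permutations w of {1,…,n} with dep(w) = ⌊n²/4⌋ is (k!)² if n = 2k is even, and n·(k!)² if n = 2k+1 is odd. -/
open Finset Equiv

def bc {n : ℕ} (w : Equiv.Perm (Fin n)) (t : ℕ) : ℕ :=
  (Finset.univ.filter (fun i : Fin n => (i : ℕ) ≤ t ∧ t < (w i : ℕ))).card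

lemma dep_eq_sum_bc {n : ℕ} (w : Equiv.Perm (Fin n)) :
    dep w = ∑ t ∈ Finset.range n, bc w t := by
  have h1 : dep w = ∑ i : Fin n, ((w i : ℕ) - (i : ℕ)) := by
    rw [dep, Finset.sum_filter_of_ne]
    intro i _ h
    exact Fin.lt_def.mpr (by omega)
  have h2 : ∀ i : Fin n, ((w i : ℕ) - (i : ℕ))
      = ∑ t ∈ Finset.range n, (if (i : ℕ) ≤ t ∧ t < (w i : ℕ) then 1 else 0) := by
    intro i
    rw [Finset.sum_ite, Finset.sum_const, Finset.sum_const]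
    have : Finset.filter (fun t => (i : ℕ) ≤ t ∧ t < (w i : ℕ)) (Finset.range n)
        = Finset.Ico (i : ℕ) (w i : ℕ) := by
      ext t
      simp only [Finset.mem_filter, Finset.mem_range, Finset.mem_Ico]
      have := (w i).isLt
      omega
    rw [this, Nat.card_Ico]
    simp
  rw [h1]
  simp only [h2]
  rw [Finset.sum_comm]
  congr 1
  ext t
  rw [bc, Finset.card_filter]

lemma card_lt_fin {n k : ℕ} (hk : k ≤ n) :
    (Finset.univ.filter (fun i : Fin n => (i : ℕ) < k)).card = k := by
  have : Finset.univ.filter (fun i : Fin n => (i : ℕ) < k)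
      = (Finset.range k).attachFin (fun m hm => lt_of_lt_of_le (Finset.mem_range.mp hm) hk) := by
    ext i
    simp [Finset.mem_attachFin]
  rw [this, Finset.card_attachFin, Finset.card_range]

lemma card_filter_w {n : ℕ} (p : ℕ → Prop) [DecidablePred p] (w : Equiv.Perm (Fin n)) :
    (Finset.univ.filter (fun i : Fin n => p (w i : ℕ))).card
      = (Finset.univ.filter (fun i : Fin n => p (i : ℕ))).card := by
  apply Finset.card_bij (fun i _ => w i)
  · intro a ha; simp_all
  · intro a _ b _ hab; exact w.injective hab
  · intro b hb; exact ⟨w.symm b, by simp_all, by simp⟩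

lemma card_lt_w {n k : ℕ} (hk : k ≤ n) (w : Equiv.Perm (Fin n)) :
    (Finset.univ.filter (fun i : Fin n => (w i : ℕ) < k)).card = k :=
  (card_filter_w (fun m => m < k) w).trans (card_lt_fin hk)

lemma card_ge_fin {n k : ℕ} :
    (Finset.univ.filter (fun i : Fin n => k ≤ (i : ℕ))).card = n - k := by
  rcases le_or_gt k n with hk | hk
  · have := Finset.card_filter_add_card_filter_not
      (s := (Finset.univ : Finset (Fin n))) (p := fun i : Fin n => (i : ℕ) < k)
    simp only [not_lt, Finset.card_univ, Fintype.card_fin] at this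
    have h2 := card_lt_fin (n := n) hk
    omega
  · have : Finset.univ.filter (fun i : Fin n => k ≤ (i : ℕ)) = ∅ := by
      apply Finset.filter_false_of_mem
      intro i _
      have := i.isLt
      omega
    rw [this]
    simp
    omega

lemma card_gt_w {n t : ℕ} (w : Equiv.Perm (Fin n)) :
    (Finset.univ.filter (fun i : Fin n => t < (w i : ℕ))).card = n - 1 - t := by
  have : (Finset.univ.filter (fun i : Fin n => t < (w i : ℕ))).card
      = (Finset.univ.filter (fun i : Fin n => t + 1 ≤ (i : ℕ))).card :=
    card_filter_w (fun m => t < m) w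
  rw [this, card_ge_fin]
  omega

lemma card_gt_fin {n t : ℕ} :
    (Finset.univ.filter (fun i : Fin n => t < (i : ℕ))).card = n - 1 - t := by
  have : (Finset.univ.filter (fun i : Fin n => t < (i : ℕ))).card
      = (Finset.univ.filter (fun i : Fin n => t + 1 ≤ (i : ℕ))).card := rfl
  rw [this, card_ge_fin]
  omega

lemma sum_min_succ (n : ℕ) :
    ∑ t ∈ Finset.range (n + 2), min (t + 1) (n + 2 - 1 - t)
      = (∑ t ∈ Finset.range n, min (t + 1) (n - 1 - t)) + n + 1 := by
  rw [Finset.sum_range_succ]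
  have h0 : min (n + 1 + 1) (n + 2 - 1 - (n + 1)) = 0 := by omega
  rw [h0, add_zero, Finset.sum_range_succ']
  have h1 : min (0 + 1) (n + 2 - 1 - 0) = 1 := by omega
  rw [h1]
  have h2 : ∑ t ∈ Finset.range n, min (t + 1 + 1) (n + 2 - 1 - (t + 1))
      = ∑ t ∈ Finset.range n, (min (t + 1) (n - 1 - t) + 1) := by
    apply Finset.sum_congr rfl
    intro t ht
    rw [Finset.mem_range] at ht
    omega
  rw [h2, Finset.sum_add_distrib]
  simp

lemma sum_min (n : ℕ) :
    ∑ t ∈ Finset.range n, min (t + 1) (n - 1 - t) = n ^ 2 / 4 := by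
  induction n using Nat.strong_induction_on with
  | _ n ih =>
    match n with
    | 0 => simp
    | 1 => simp
    | (m + 2) =>
      rw [sum_min_succ, ih m (by omega)]
      have : (m + 2) ^ 2 = m ^ 2 + 4 * m + 4 := by ring
      omega

lemma bc_le {n : ℕ} (w : Equiv.Perm (Fin n)) (t : ℕ) :
    bc w t ≤ min (t + 1) (n - 1 - t) := by
  apply le_min
  · calc bc w t ≤ (Finset.univ.filter (fun i : Fin n => (i : ℕ) < t + 1)).card := by
          apply Finset.card_le_card
          intro i hi
          rw [Finset.mem_filter] at hi ⊢
          exact ⟨hi.1, by omega⟩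
      _ ≤ t + 1 := by
          rcases le_or_gt (t + 1) n with h | h
          · rw [card_lt_fin h]
          · have h3 : (Finset.univ.filter (fun i : Fin n => (i : ℕ) < t + 1)).card ≤ n := by
              have h4 := Finset.card_filter_le (Finset.univ : Finset (Fin n))
                (fun i : Fin n => (i : ℕ) < t + 1)
              simpa using h4
            omega
  · calc bc w t ≤ (Finset.univ.filter (fun i : Fin n => t < (w i : ℕ))).card := by
          apply Finset.card_le_card
          intro i hi
          rw [Finset.mem_filter] at hi ⊢
          exact ⟨hi.1, hi.2.2⟩
      _ = n - 1 - t := card_gt_w w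

lemma bc_max {n : ℕ} (w : Equiv.Perm (Fin n)) (h : dep w = n ^ 2 / 4) :
    ∀ t < n, bc w t = min (t + 1) (n - 1 - t) := by
  have h1 : ∑ t ∈ Finset.range n, bc w t = ∑ t ∈ Finset.range n, min (t + 1) (n - 1 - t) := by
    rw [← dep_eq_sum_bc, sum_min, h]
  have h2 := (Finset.sum_eq_sum_iff_of_le (fun t _ => bc_le w t)).mp h1
  intro t ht
  exact h2 t (Finset.mem_range.mpr ht)

-- pigeonhole for even case
lemma pigeon_even {k : ℕ} (w : Equiv.Perm (Fin (2 * k)))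
    (h : ∀ i : Fin (2 * k), (i : ℕ) < k → k ≤ (w i : ℕ)) :
    ∀ i : Fin (2 * k), k ≤ (i : ℕ) → (w i : ℕ) < k := by
  have hA : (Finset.univ.filter (fun i : Fin (2 * k) => (i : ℕ) < k)).card = k :=
    card_lt_fin (by omega)
  have hT : (Finset.univ.filter (fun i : Fin (2 * k) => k ≤ (w i : ℕ))).card = k := by
    rw [card_filter_w (fun m => k ≤ m) w, card_ge_fin]
    omega
  have hsub : (Finset.univ.filter (fun i : Fin (2 * k) => (i : ℕ) < k))
      ⊆ (Finset.univ.filter (fun i : Fin (2 * k) => k ≤ (w i : ℕ))) := by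
    intro i hi
    rw [Finset.mem_filter] at hi ⊢
    exact ⟨hi.1, h i hi.2⟩
  have heq := Finset.eq_of_subset_of_card_le hsub (by omega)
  intro i hi
  by_contra hc
  have : i ∈ Finset.univ.filter (fun i : Fin (2 * k) => k ≤ (w i : ℕ)) := by
    rw [Finset.mem_filter]; exact ⟨Finset.mem_univ _, by omega⟩
  rw [← heq, Finset.mem_filter] at this
  omega

lemma dep_max_even {k : ℕ} (hk : 1 ≤ k) (w : Equiv.Perm (Fin (2 * k))) :
    dep w = (2 * k) ^ 2 / 4 ↔ ∀ i : Fin (2 * k), (i : ℕ) < k → k ≤ (w i : ℕ) := by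
  constructor
  · intro h i hik
    have hb := bc_max w h (k - 1) (by omega)
    have hmin : min (k - 1 + 1) (2 * k - 1 - (k - 1)) = k := by omega
    rw [hmin] at hb
    have hsub : (Finset.univ.filter (fun i : Fin (2 * k) => (i : ℕ) ≤ k - 1 ∧ k - 1 < (w i : ℕ)))
        ⊆ (Finset.univ.filter (fun i : Fin (2 * k) => (i : ℕ) < k)) := by
      intro j hj
      rw [Finset.mem_filter] at hj ⊢
      exact ⟨hj.1, by omega⟩
    have heq := Finset.eq_of_subset_of_card_le hsub
      (by rw [card_lt_fin (by omega : k ≤ 2 * k)]; rw [bc] at hb; omega)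
    have : i ∈ Finset.univ.filter (fun i : Fin (2 * k) => (i : ℕ) ≤ k - 1 ∧ k - 1 < (w i : ℕ)) := by
      rw [heq, Finset.mem_filter]
      exact ⟨Finset.mem_univ _, hik⟩
    rw [Finset.mem_filter] at this
    omega
  · intro h
    have h2 := pigeon_even w h
    rw [dep_eq_sum_bc, ← sum_min (2 * k)]
    apply Finset.sum_congr rfl
    intro t ht
    rw [Finset.mem_range] at ht
    rcases lt_or_ge t k with htk | htk
    · have : Finset.univ.filter (fun i : Fin (2 * k) => (i : ℕ) ≤ t ∧ t < (w i : ℕ))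
          = Finset.univ.filter (fun i : Fin (2 * k) => (i : ℕ) < t + 1) := by
        ext i
        rw [Finset.mem_filter, Finset.mem_filter]
        constructor
        · intro hi; exact ⟨hi.1, by omega⟩
        · intro hi
          refine ⟨hi.1, by omega, ?_⟩
          have := h i (by omega)
          omega
      rw [bc, this, card_lt_fin (by omega)]
      omega
    · have : Finset.univ.filter (fun i : Fin (2 * k) => (i : ℕ) ≤ t ∧ t < (w i : ℕ))
          = Finset.univ.filter (fun i : Fin (2 * k) => t < (w i : ℕ)) := by
        ext i
        rw [Finset.mem_filter, Finset.mem_filter]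
        constructor
        · intro hi; exact ⟨hi.1, hi.2.2⟩
        · intro hi
          refine ⟨hi.1, ?_, hi.2⟩
          by_contra hc
          have := h2 i (by omega)
          omega
      rw [bc, this, card_gt_w w]
      omega

lemma dep_max_odd {k : ℕ} (w : Equiv.Perm (Fin (2 * k + 1))) :
    dep w = (2 * k + 1) ^ 2 / 4 ↔
      ((∀ i : Fin (2 * k + 1), (i : ℕ) < k → k ≤ (w i : ℕ)) ∧
       (∀ i : Fin (2 * k + 1), k < (i : ℕ) → (w i : ℕ) ≤ k)) := by
  constructor
  · intro h
    constructor
    · rcases Nat.eq_zero_or_pos k with hk | hk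
      · intro i hik; omega
      intro i hik
      have hb := bc_max w h (k - 1) (by omega)
      have hmin : min (k - 1 + 1) (2 * k + 1 - 1 - (k - 1)) = k := by omega
      rw [hmin] at hb
      have hsub : (Finset.univ.filter
            (fun i : Fin (2 * k + 1) => (i : ℕ) ≤ k - 1 ∧ k - 1 < (w i : ℕ)))
          ⊆ (Finset.univ.filter (fun i : Fin (2 * k + 1) => (i : ℕ) < k)) := by
        intro j hj
        rw [Finset.mem_filter] at hj ⊢
        exact ⟨hj.1, by omega⟩
      have heq := Finset.eq_of_subset_of_card_le hsub
        (by rw [card_lt_fin (by omega : k ≤ 2 * k + 1)]; rw [bc] at hb; omega)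
      have : i ∈ Finset.univ.filter
          (fun i : Fin (2 * k + 1) => (i : ℕ) ≤ k - 1 ∧ k - 1 < (w i : ℕ)) := by
        rw [heq, Finset.mem_filter]
        exact ⟨Finset.mem_univ _, hik⟩
      rw [Finset.mem_filter] at this
      omega
    · intro i hik
      have hb := bc_max w h k (by omega)
      have hmin : min (k + 1) (2 * k + 1 - 1 - k) = k := by omega
      rw [hmin] at hb
      have hsub : (Finset.univ.filter
            (fun i : Fin (2 * k + 1) => (i : ℕ) ≤ k ∧ k < (w i : ℕ)))
          ⊆ (Finset.univ.filter (fun i : Fin (2 * k + 1) => k < (w i : ℕ))) := by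
        intro j hj
        rw [Finset.mem_filter] at hj ⊢
        exact ⟨hj.1, hj.2.2⟩
      have hcard : (Finset.univ.filter
          (fun i : Fin (2 * k + 1) => k < (w i : ℕ))).card = k := by
        rw [card_gt_w w]; omega
      have heq := Finset.eq_of_subset_of_card_le hsub
        (by rw [hcard]; rw [bc] at hb; omega)
      by_contra hc
      have : i ∈ Finset.univ.filter (fun i : Fin (2 * k + 1) => k < (w i : ℕ)) := by
        rw [Finset.mem_filter]; exact ⟨Finset.mem_univ _, by omega⟩
      rw [← heq, Finset.mem_filter] at this
      omega
  · rintro ⟨h1, h2⟩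
    rw [dep_eq_sum_bc, ← sum_min (2 * k + 1)]
    apply Finset.sum_congr rfl
    intro t ht
    rw [Finset.mem_range] at ht
    rcases lt_or_ge t k with htk | htk
    · have : Finset.univ.filter (fun i : Fin (2 * k + 1) => (i : ℕ) ≤ t ∧ t < (w i : ℕ))
          = Finset.univ.filter (fun i : Fin (2 * k + 1) => (i : ℕ) < t + 1) := by
        ext i
        rw [Finset.mem_filter, Finset.mem_filter]
        constructor
        · intro hi; exact ⟨hi.1, by omega⟩
        · intro hi
          refine ⟨hi.1, by omega, ?_⟩
          have := h1 i (by omega)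
          omega
      rw [bc, this, card_lt_fin (by omega)]
      omega
    · have : Finset.univ.filter (fun i : Fin (2 * k + 1) => (i : ℕ) ≤ t ∧ t < (w i : ℕ))
          = Finset.univ.filter (fun i : Fin (2 * k + 1) => t < (w i : ℕ)) := by
        ext i
        rw [Finset.mem_filter, Finset.mem_filter]
        constructor
        · intro hi; exact ⟨hi.1, hi.2.2⟩
        · intro hi
          refine ⟨hi.1, ?_, hi.2⟩
          by_contra hc
          have := h2 i (by omega)
          omega
      rw [bc, this, card_gt_w w]
      omega

noncomputable def emb (k : ℕ) : (Fin k ⊕ Fin k) ≃ Fin (2 * k) :=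
  finSumFinEquiv.trans (finCongr (two_mul k).symm)

lemma emb_inl (k : ℕ) (a : Fin k) : ((emb k (Sum.inl a)) : ℕ) = a := by
  simp [emb]

lemma emb_inr (k : ℕ) (a : Fin k) : ((emb k (Sum.inr a)) : ℕ) = k + a := by
  simp [emb]
  omega

noncomputable def G {k : ℕ} (p : Equiv.Perm (Fin k) × Equiv.Perm (Fin k)) :
    Equiv.Perm (Fin (2 * k)) :=
  (emb k).permCongr ((Equiv.sumCongr p.1 p.2).trans (Equiv.sumComm (Fin k) (Fin k)))

lemma G_inl {k : ℕ} (p : Equiv.Perm (Fin k) × Equiv.Perm (Fin k)) (a : Fin k) :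
    G p (emb k (Sum.inl a)) = emb k (Sum.inr (p.1 a)) := by
  simp [G, Equiv.permCongr_apply]

lemma G_inr {k : ℕ} (p : Equiv.Perm (Fin k) × Equiv.Perm (Fin k)) (a : Fin k) :
    G p (emb k (Sum.inr a)) = emb k (Sum.inl (p.2 a)) := by
  simp [G, Equiv.permCongr_apply]


lemma card_even (k : ℕ) :
    (Finset.univ.filter
      (fun w : Equiv.Perm (Fin (2 * k)) => ∀ i : Fin (2 * k), (i : ℕ) < k → k ≤ (w i : ℕ))).card
      = (Nat.factorial k) ^ 2 := by
  have himg : Finset.univ.filter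
      (fun w : Equiv.Perm (Fin (2 * k)) => ∀ i : Fin (2 * k), (i : ℕ) < k → k ≤ (w i : ℕ))
      = Finset.image G Finset.univ := by
    ext w
    simp only [Finset.mem_filter, Finset.mem_univ, true_and, Finset.mem_image]
    constructor
    · intro hP
      have h2 := pigeon_even w hP
      -- build sigma
      have hσval : ∀ a : Fin k, (w (emb k (Sum.inl a)) : ℕ) - k < k := by
        intro a
        have h3 := (w (emb k (Sum.inl a))).isLt
        have h4 := hP (emb k (Sum.inl a)) (by rw [emb_inl]; exact a.isLt)
        omega
      have hσge : ∀ a : Fin k, k ≤ (w (emb k (Sum.inl a)) : ℕ) := by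
        intro a
        exact hP _ (by rw [emb_inl]; exact a.isLt)
      set σf : Fin k → Fin k := fun a => ⟨(w (emb k (Sum.inl a)) : ℕ) - k, hσval a⟩ with hσf
      have hσinj : Function.Injective σf := by
        intro a b hab
        have h5 : (w (emb k (Sum.inl a)) : ℕ) - k = (w (emb k (Sum.inl b)) : ℕ) - k :=
          congrArg Fin.val hab
        have h6 : w (emb k (Sum.inl a)) = w (emb k (Sum.inl b)) := by
          apply Fin.ext
          have := hσge a; have := hσge b
          omega
        exact Sum.inl_injective ((emb k).injective (w.injective h6))
      have hτval : ∀ a : Fin k, (w (emb k (Sum.inr a)) : ℕ) < k := by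
        intro a
        apply h2
        rw [emb_inr]
        omega
      set τf : Fin k → Fin k := fun a => ⟨(w (emb k (Sum.inr a)) : ℕ), hτval a⟩ with hτf
      have hτinj : Function.Injective τf := by
        intro a b hab
        have h5 := congrArg Fin.val hab
        simp only [hτf] at h5
        exact Sum.inr_injective ((emb k).injective (w.injective (Fin.ext h5)))
      refine ⟨(Equiv.ofBijective σf (Finite.injective_iff_bijective.mp hσinj),
               Equiv.ofBijective τf (Finite.injective_iff_bijective.mp hτinj)), ?_⟩
      apply Equiv.ext
      intro x
      obtain ⟨y, rfl⟩ : ∃ y, emb k y = x := ⟨(emb k).symm x, by simp⟩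
      cases y with
      | inl a =>
        rw [G_inl]
        apply Fin.ext
        rw [emb_inr]
        have := hσge a
        simp only [Equiv.ofBijective_apply, hσf]
        omega
      | inr a =>
        rw [G_inr]
        apply Fin.ext
        rw [emb_inl]
        simp only [Equiv.ofBijective_apply, hτf]
    · rintro ⟨p, rfl⟩
      intro i hik
      obtain ⟨y, rfl⟩ : ∃ y, emb k y = i := ⟨(emb k).symm i, by simp⟩
      cases y with
      | inl a =>
        rw [G_inl, emb_inr]
        omega
      | inr a =>
        rw [emb_inr] at hik
        omega
  rw [himg, Finset.card_image_of_injective _ ?_, Finset.card_univ]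
  · rw [Fintype.card_prod, Fintype.card_perm, Fintype.card_fin, sq]
  · intro p q hpq
    have h1 : p.1 = q.1 := by
      apply Equiv.ext
      intro a
      have := congrArg (fun u => u (emb k (Sum.inl a))) hpq
      simp only [G_inl] at this
      exact Sum.inr_injective ((emb k).injective this)
    have h2 : p.2 = q.2 := by
      apply Equiv.ext
      intro a
      have := congrArg (fun u => u (emb k (Sum.inr a))) hpq
      simp only [G_inr] at this
      exact Sum.inl_injective ((emb k).injective this)
    exact Prod.ext h1 h2

def mid (k : ℕ) : Fin (2 * k + 1) := ⟨k, by omega⟩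

lemma succAbove_val {n : ℕ} (m : Fin (n + 1)) (j : Fin n) :
    ((m.succAbove j : ℕ) = j ∧ (j : ℕ) < (m : ℕ)) ∨
    ((m.succAbove j : ℕ) = (j : ℕ) + 1 ∧ (m : ℕ) ≤ (j : ℕ)) := by
  rcases lt_or_ge (Fin.castSucc j) m with h | h
  · left
    rw [Fin.succAbove_of_castSucc_lt _ _ h]
    exact ⟨rfl, Fin.lt_def.mp h⟩
  · right
    rw [Fin.succAbove_of_le_castSucc _ _ h]
    exact ⟨rfl, Fin.le_def.mp h⟩

noncomputable def H {k : ℕ} (p : Fin (2 * k + 1) × Equiv.Perm (Fin (2 * k))) :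
    Equiv.Perm (Fin (2 * k + 1)) :=
  (finSuccEquiv' (mid k)).trans ((Equiv.optionCongr p.2).trans (finSuccEquiv' p.1).symm)

lemma H_mid {k : ℕ} (p : Fin (2 * k + 1) × Equiv.Perm (Fin (2 * k))) :
    H p (mid k) = p.1 := by
  simp [H, finSuccEquiv'_at, finSuccEquiv'_symm_none]

lemma H_succAbove {k : ℕ} (p : Fin (2 * k + 1) × Equiv.Perm (Fin (2 * k))) (j : Fin (2 * k)) :
    H p ((mid k).succAbove j) = p.1.succAbove (p.2 j) := by
  simp [H, finSuccEquiv'_succAbove, finSuccEquiv'_symm_some]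

noncomputable def fw {k : ℕ} (w : Equiv.Perm (Fin (2 * k + 1))) :
    Option (Fin (2 * k)) ≃ Option (Fin (2 * k)) :=
  ((finSuccEquiv' (mid k)).symm.trans (w.trans (finSuccEquiv' (w (mid k)))))

lemma fw_none {k : ℕ} (w : Equiv.Perm (Fin (2 * k + 1))) : fw w none = none := by
  simp [fw, finSuccEquiv'_symm_none, finSuccEquiv'_at]

noncomputable def uw {k : ℕ} (w : Equiv.Perm (Fin (2 * k + 1))) : Equiv.Perm (Fin (2 * k)) :=
  Equiv.removeNone (fw w)

lemma fw_some {k : ℕ} (w : Equiv.Perm (Fin (2 * k + 1))) (j : Fin (2 * k)) :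
    fw w (some j) = some (uw w j) := by
  have hne : fw w (some j) ≠ none := by
    intro hc
    have := (fw w).injective (hc.trans (fw_none w).symm)
    simp at this
  obtain ⟨x, hx⟩ := Option.ne_none_iff_exists'.mp hne
  rw [uw, ← Equiv.removeNone_some (fw w) ⟨x, hx⟩]

lemma uw_spec {k : ℕ} (w : Equiv.Perm (Fin (2 * k + 1))) (j : Fin (2 * k)) :
    (w (mid k)).succAbove (uw w j) = w ((mid k).succAbove j) := by
  have h := fw_some w j
  have h2 := congrArg (finSuccEquiv' (w (mid k))).symm h
  rw [finSuccEquiv'_symm_some] at h2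
  rw [← h2]
  simp [fw, finSuccEquiv'_symm_some]

lemma H_uw {k : ℕ} (w : Equiv.Perm (Fin (2 * k + 1))) : H (w (mid k), uw w) = w := by
  apply Equiv.ext
  intro x
  rcases eq_or_ne x (mid k) with rfl | hx
  · rw [H_mid]
  · obtain ⟨j, rfl⟩ := Fin.exists_succAbove_eq hx
    rw [H_succAbove]
    exact uw_spec w j

section OddPigeon
variable {k : ℕ} (w : Equiv.Perm (Fin (2 * k + 1)))

lemma pigeon_odd_low
    (h1 : ∀ i : Fin (2 * k + 1), (i : ℕ) < k → k ≤ (w i : ℕ))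
    (h2 : ∀ i : Fin (2 * k + 1), k < (i : ℕ) → (w i : ℕ) ≤ k)
    (hm : (w (mid k) : ℕ) < k) :
    ∀ i : Fin (2 * k + 1), (i : ℕ) < k → k < (w i : ℕ) := by
  have hT : (Finset.univ.filter (fun i : Fin (2 * k + 1) => k < (w i : ℕ))).card = k := by
    rw [card_gt_w w]; omega
  have hA : (Finset.univ.filter (fun i : Fin (2 * k + 1) => (i : ℕ) < k)).card = k :=
    card_lt_fin (by omega)
  have hsub : (Finset.univ.filter (fun i : Fin (2 * k + 1) => k < (w i : ℕ)))
      ⊆ (Finset.univ.filter (fun i : Fin (2 * k + 1) => (i : ℕ) < k)) := by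
    intro i hi
    rw [Finset.mem_filter] at hi ⊢
    refine ⟨hi.1, ?_⟩
    by_contra hc
    rcases eq_or_lt_of_le (not_lt.mp hc) with heq | hlt
    · have : i = mid k := by apply Fin.ext; simp [mid]; omega
      rw [this] at hi
      omega
    · have := h2 i hlt
      omega
  have heq := Finset.eq_of_subset_of_card_le hsub (by omega)
  intro i hik
  have : i ∈ Finset.univ.filter (fun i : Fin (2 * k + 1) => k < (w i : ℕ)) := by
    rw [heq, Finset.mem_filter]
    exact ⟨Finset.mem_univ _, hik⟩
  rw [Finset.mem_filter] at this
  exact this.2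

lemma pigeon_odd_high
    (h1 : ∀ i : Fin (2 * k + 1), (i : ℕ) < k → k ≤ (w i : ℕ))
    (h2 : ∀ i : Fin (2 * k + 1), k < (i : ℕ) → (w i : ℕ) ≤ k)
    (hm : k < (w (mid k) : ℕ)) :
    ∀ i : Fin (2 * k + 1), k < (i : ℕ) → (w i : ℕ) < k := by
  have hB : (Finset.univ.filter (fun i : Fin (2 * k + 1) => (w i : ℕ) < k)).card = k :=
    card_lt_w (by omega) w
  have hC : (Finset.univ.filter (fun i : Fin (2 * k + 1) => k < (i : ℕ))).card = k := by
    rw [card_gt_fin]; omega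
  have hsub : (Finset.univ.filter (fun i : Fin (2 * k + 1) => (w i : ℕ) < k))
      ⊆ (Finset.univ.filter (fun i : Fin (2 * k + 1) => k < (i : ℕ))) := by
    intro i hi
    rw [Finset.mem_filter] at hi ⊢
    refine ⟨hi.1, ?_⟩
    by_contra hc
    rcases eq_or_lt_of_le (not_lt.mp hc) with heq | hlt
    · have : i = mid k := by apply Fin.ext; simp [mid]; omega
      rw [this] at hi
      omega
    · have := h1 i hlt
      omega
  have heq := Finset.eq_of_subset_of_card_le hsub (by omega)
  intro i hik
  have : i ∈ Finset.univ.filter (fun i : Fin (2 * k + 1) => k < (i : ℕ)) := by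
    rw [Finset.mem_filter]
    exact ⟨Finset.mem_univ _, hik⟩
  rw [← heq, Finset.mem_filter] at this
  exact this.2

end OddPigeon

lemma H_mem_O {k : ℕ} (m : Fin (2 * k + 1)) (u : Equiv.Perm (Fin (2 * k)))
    (hu : ∀ j : Fin (2 * k), (j : ℕ) < k → k ≤ (u j : ℕ)) :
    (∀ i : Fin (2 * k + 1), (i : ℕ) < k → k ≤ (H (m, u) i : ℕ)) ∧
    (∀ i : Fin (2 * k + 1), k < (i : ℕ) → (H (m, u) i : ℕ) ≤ k) := by
  have hu2 := pigeon_even u hu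
  have hmidval : ((mid k : Fin (2 * k + 1)) : ℕ) = k := rfl
  constructor
  · intro i hik
    have hne : i ≠ mid k := by
      intro hc; rw [hc, hmidval] at hik; omega
    obtain ⟨j, rfl⟩ := Fin.exists_succAbove_eq hne
    have hj : (j : ℕ) < k := by
      rcases succAbove_val (mid k) j with ⟨hv, hlt⟩ | ⟨hv, hge⟩ <;> rw [hmidval] at * <;> omega
    rw [H_succAbove]
    show k ≤ ((m.succAbove (u j) : Fin (2 * k + 1)) : ℕ)
    have := hu j hj
    rcases succAbove_val m (u j) with ⟨hv, _⟩ | ⟨hv, _⟩ <;> omega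
  · intro i hik
    have hne : i ≠ mid k := by
      intro hc; rw [hc, hmidval] at hik; omega
    obtain ⟨j, rfl⟩ := Fin.exists_succAbove_eq hne
    have hj : k ≤ (j : ℕ) := by
      rcases succAbove_val (mid k) j with ⟨hv, hlt⟩ | ⟨hv, hge⟩ <;> rw [hmidval] at * <;> omega
    rw [H_succAbove]
    show ((m.succAbove (u j) : Fin (2 * k + 1)) : ℕ) ≤ k
    have := hu2 j hj
    rcases succAbove_val m (u j) with ⟨hv, _⟩ | ⟨hv, _⟩ <;> omega

lemma uw_mem_E {k : ℕ} (w : Equiv.Perm (Fin (2 * k + 1)))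
    (h1 : ∀ i : Fin (2 * k + 1), (i : ℕ) < k → k ≤ (w i : ℕ))
    (h2 : ∀ i : Fin (2 * k + 1), k < (i : ℕ) → (w i : ℕ) ≤ k) :
    ∀ j : Fin (2 * k), (j : ℕ) < k → k ≤ (uw w j : ℕ) := by
  intro j hj
  have hmidval : ((mid k : Fin (2 * k + 1)) : ℕ) = k := rfl
  have hival : (((mid k).succAbove j : Fin (2 * k + 1)) : ℕ) = (j : ℕ) := by
    rcases succAbove_val (mid k) j with ⟨hv, _⟩ | ⟨hv, hge⟩
    · exact hv
    · rw [hmidval] at hge; omega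
  have hv := h1 ((mid k).succAbove j) (by omega)
  have hspec := congrArg Fin.val (uw_spec w j)
  rcases succAbove_val (w (mid k)) (uw w j) with ⟨hs, _⟩ | ⟨hs, hm⟩
  · omega
  · -- uw w j + 1 = w i
    by_contra hc
    have huj : (uw w j : ℕ) = k - 1 := by omega
    have hwi : (w ((mid k).succAbove j) : ℕ) = k := by omega
    have hmlt : (w (mid k) : ℕ) < k := by omega
    have := pigeon_odd_low w h1 h2 hmlt ((mid k).succAbove j) (by omega)
    omega

lemma uw_H {k : ℕ} (p : Fin (2 * k + 1) × Equiv.Perm (Fin (2 * k))) : uw (H p) = p.2 := by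
  have hfw : fw (H p) = Equiv.optionCongr p.2 := by
    apply Equiv.ext
    intro x
    cases x with
    | none => rw [fw_none]; rfl
    | some j =>
      show (finSuccEquiv' (H p (mid k))) (H p ((finSuccEquiv' (mid k)).symm (some j)))
        = some (p.2 j)
      rw [finSuccEquiv'_symm_some, H_succAbove, H_mid, finSuccEquiv'_succAbove]
  rw [uw, hfw, Equiv.removeNone_optionCongr]

lemma card_odd (k : ℕ) :
    (Finset.univ.filter (fun w : Equiv.Perm (Fin (2 * k + 1)) =>
      (∀ i : Fin (2 * k + 1), (i : ℕ) < k → k ≤ (w i : ℕ)) ∧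
      (∀ i : Fin (2 * k + 1), k < (i : ℕ) → (w i : ℕ) ≤ k))).card
      = (2 * k + 1) * (Nat.factorial k) ^ 2 := by
  have hcard : ((Finset.univ : Finset (Fin (2 * k + 1))) ×ˢ
      (Finset.univ.filter (fun u : Equiv.Perm (Fin (2 * k)) =>
        ∀ j : Fin (2 * k), (j : ℕ) < k → k ≤ (u j : ℕ)))).card
      = (2 * k + 1) * (Nat.factorial k) ^ 2 := by
    rw [Finset.card_product, Finset.card_univ, Fintype.card_fin, card_even]
  rw [← hcard]
  apply Finset.card_bij' (i := fun w _ => (w (mid k), uw w)) (j := fun p _ => H p)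
  · intro w hw
    rw [Finset.mem_filter] at hw
    rw [Finset.mem_product, Finset.mem_filter]
    exact ⟨Finset.mem_univ _, Finset.mem_univ _, uw_mem_E w hw.2.1 hw.2.2⟩
  · rintro ⟨m, u⟩ hp
    rw [Finset.mem_product, Finset.mem_filter] at hp
    rw [Finset.mem_filter]
    exact ⟨Finset.mem_univ _, H_mem_O m u hp.2.2⟩
  · intro w _
    exact H_uw w
  · rintro ⟨m, u⟩ _
    exact Prod.ext (H_mid (m, u)) (uw_H (m, u))

/-- For every `n ≥ 1`, the number of permutations `w` of `{1,…,n}` of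
maximal depth `⌊n²/4⌋` is `(k!)²` if `n = 2k` and `n·(k!)²` if `n = 2k+1`. -/
theorem card_max_depth (n : ℕ) (hn : 1 ≤ n) (k : ℕ) :
    (n = 2 * k →
      (Finset.univ.filter (fun w : Equiv.Perm (Fin n) => dep w = n ^ 2 / 4)).card
        = (Nat.factorial k) ^ 2) ∧
    (n = 2 * k + 1 →
      (Finset.univ.filter (fun w : Equiv.Perm (Fin n) => dep w = n ^ 2 / 4)).card
        = n * (Nat.factorial k) ^ 2) := by
  constructor
  · rintro rfl
    have hk : 1 ≤ k := by omega
    rw [← card_even k]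
    congr 1
    apply Finset.filter_congr
    intro w _
    simpa using dep_max_even hk w
  · rintro rfl
    rw [← card_odd k]
    congr 1
    apply Finset.filter_congr
    intro w _
    simpa using dep_max_odd w
end

section
/- For every n ≥ 1, the number of permutations w of {1,…,n} with dep(w) = 1 is n − 1, and for every n ≥ 2, the number of permutations w of {1,…,n} with dep(w) = 2 is C(n−2, 2) + 3(n−2). -/
open Finset Equiv

namespace DepTmp
variable {n : ℕ}

def depD (w : Perm (Fin n)) : ℕ :=
  ∑ i ∈ Finset.univ.filter (fun i : Fin n => w i < i), ((i : ℕ) - (w i : ℕ))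

lemma sum_sub_eq_zero (w : Perm (Fin n)) :
    ∑ i : Fin n, ((w i : ℤ) - (i : ℤ)) = 0 := by
  rw [Finset.sum_sub_distrib, Equiv.sum_comp w (fun i : Fin n => (i : ℤ))]
  ring

lemma dep_eq_depD (w : Perm (Fin n)) : dep w = depD w := by
  have h0 := sum_sub_eq_zero w
  have key : ∀ i : Fin n, ((w i : ℤ) - i) =
      ((if i < w i then ((w i : ℕ) - (i : ℕ) : ℕ) else 0 : ℕ) : ℤ)
      - ((if w i < i then ((i : ℕ) - (w i : ℕ) : ℕ) else 0 : ℕ) : ℤ) := by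
    intro i
    rcases lt_trichotomy i (w i) with h | h | h
    · rw [if_pos h, if_neg (asymm h)]
      have hle : (i : ℕ) ≤ (w i : ℕ) := le_of_lt h
      push_cast [hle]; ring
    · rw [← h]; simp
    · rw [if_neg (asymm h), if_pos h]
      have hle : (w i : ℕ) ≤ (i : ℕ) := le_of_lt h
      push_cast [hle]; ring
  have h1 : ∑ i : Fin n, ((w i : ℤ) - i)
      = (dep w : ℤ) - (depD w : ℤ) := by
    rw [Finset.sum_congr rfl (fun i _ => key i), Finset.sum_sub_distrib]
    congr 1
    · rw [dep, Nat.cast_sum, Finset.sum_filter]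
      push_cast
      rfl
    · rw [depD, Nat.cast_sum, Finset.sum_filter]
      push_cast
      rfl
  rw [h0] at h1
  omega

lemma sum_one {s : Finset (Fin n)} {f : Fin n → ℕ} (h1 : ∀ i ∈ s, 1 ≤ f i)
    (h2 : ∑ i ∈ s, f i = 1) : ∃ a, s = {a} ∧ f a = 1 := by
  have hc : s.card ≤ 1 := by
    calc s.card = ∑ _i ∈ s, 1 := by simp
    _ ≤ ∑ i ∈ s, f i := Finset.sum_le_sum h1
    _ = 1 := h2
  have hc2 : s.card ≠ 0 := by
    intro h
    rw [Finset.card_eq_zero.mp h] at h2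
    simp at h2
  have : s.card = 1 := by omega
  obtain ⟨a, ha⟩ := Finset.card_eq_one.mp this
  refine ⟨a, ha, ?_⟩
  rw [ha, Finset.sum_singleton] at h2
  exact h2

lemma sum_two {s : Finset (Fin n)} {f : Fin n → ℕ} (h1 : ∀ i ∈ s, 1 ≤ f i)
    (h2 : ∑ i ∈ s, f i = 2) :
    (∃ a, s = {a} ∧ f a = 2) ∨
    (∃ a b, a ≠ b ∧ s = {a, b} ∧ f a = 1 ∧ f b = 1) := by
  have hc : s.card ≤ 2 := by
    calc s.card = ∑ _i ∈ s, 1 := by simp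
    _ ≤ ∑ i ∈ s, f i := Finset.sum_le_sum h1
    _ = 2 := h2
  have hc2 : s.card ≠ 0 := by
    intro h
    rw [Finset.card_eq_zero.mp h] at h2
    simp at h2
  rcases (by omega : s.card = 1 ∨ s.card = 2) with h | h
  · obtain ⟨a, ha⟩ := Finset.card_eq_one.mp h
    rw [ha, Finset.sum_singleton] at h2
    exact Or.inl ⟨a, ha, h2⟩
  · obtain ⟨a, b, hab, hs⟩ := Finset.card_eq_two.mp h
    rw [hs, Finset.sum_pair hab] at h2
    have ha1 : 1 ≤ f a := h1 a (by rw [hs]; simp)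
    have hb1 : 1 ≤ f b := h1 b (by rw [hs]; simp)
    exact Or.inr ⟨a, b, hab, hs, by omega, by omega⟩


lemma swap_apply_nat {p q : Fin n} (x : Fin n) :
    ((Equiv.swap p q) x : ℕ) =
      if (x : ℕ) = (p : ℕ) then q else if (x : ℕ) = (q : ℕ) then p else x := by
  rw [Equiv.swap_apply_def]
  split_ifs with h1 h2 h3 h4 h5 <;> first | rfl | simp_all [Fin.ext_iff]

/-- adjacent transposition (a, a+1) -/
def mk0 (n a : ℕ) : Perm (Fin n) :=
  if h : a + 1 < n then Equiv.swap ⟨a, by omega⟩ ⟨a + 1, h⟩ else 1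

/-- transposition (a, a+2) -/
def mk1 (n a : ℕ) : Perm (Fin n) :=
  if h : a + 2 < n then Equiv.swap ⟨a, by omega⟩ ⟨a + 2, h⟩ else 1

/-- 3-cycle a → a+2, a+1 → a, a+2 → a+1 -/
def mk2 (n a : ℕ) : Perm (Fin n) :=
  if h : a + 2 < n then
    Equiv.swap ⟨a, by omega⟩ ⟨a + 2, h⟩ * Equiv.swap ⟨a + 1, by omega⟩ ⟨a + 2, h⟩
  else 1

/-- 3-cycle a → a+1, a+1 → a+2, a+2 → a -/
def mk3 (n a : ℕ) : Perm (Fin n) :=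
  if h : a + 2 < n then
    Equiv.swap ⟨a + 1, by omega⟩ ⟨a + 2, h⟩ * Equiv.swap ⟨a, by omega⟩ ⟨a + 2, h⟩
  else 1

/-- product (a, a+1)(b, b+1) -/
def mk4 (n a b : ℕ) : Perm (Fin n) :=
  if h : a + 1 < n ∧ b + 1 < n then
    Equiv.swap ⟨a, by omega⟩ ⟨a + 1, h.1⟩ * Equiv.swap ⟨b, by omega⟩ ⟨b + 1, h.2⟩
  else 1

lemma mk0_apply {a : ℕ} (h : a + 1 < n) (x : Fin n) :
    ((mk0 n a) x : ℕ) =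
      if (x : ℕ) = a then a + 1 else if (x : ℕ) = a + 1 then a else x := by
  rw [mk0, dif_pos h]
  simp only [apply_ite (Fin.val (n := n)), swap_apply_nat, Fin.ext_iff, Fin.val_mk]

lemma mk1_apply {a : ℕ} (h : a + 2 < n) (x : Fin n) :
    ((mk1 n a) x : ℕ) =
      if (x : ℕ) = a then a + 2 else if (x : ℕ) = a + 2 then a else x := by
  rw [mk1, dif_pos h]
  simp only [apply_ite (Fin.val (n := n)), swap_apply_nat, Fin.ext_iff, Fin.val_mk]

lemma mk2_apply {a : ℕ} (h : a + 2 < n) (x : Fin n) :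
    ((mk2 n a) x : ℕ) =
      if (x : ℕ) = a then a + 2 else if (x : ℕ) = a + 1 then a
      else if (x : ℕ) = a + 2 then a + 1 else x := by
  rw [mk2, dif_pos h, Equiv.Perm.mul_apply]
  simp only [apply_ite (Fin.val (n := n)), swap_apply_nat, Fin.ext_iff, Fin.val_mk]
  split_ifs <;> omega

lemma mk3_apply {a : ℕ} (h : a + 2 < n) (x : Fin n) :
    ((mk3 n a) x : ℕ) =
      if (x : ℕ) = a then a + 1 else if (x : ℕ) = a + 1 then a + 2
      else if (x : ℕ) = a + 2 then a else x := by
  rw [mk3, dif_pos h, Equiv.Perm.mul_apply]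
  simp only [apply_ite (Fin.val (n := n)), swap_apply_nat, Fin.ext_iff, Fin.val_mk]
  split_ifs <;> omega

lemma mk4_apply {a b : ℕ} (ha : a + 1 < n) (hb : b + 1 < n) (hab : a + 2 ≤ b) (x : Fin n) :
    ((mk4 n a b) x : ℕ) =
      if (x : ℕ) = a then a + 1 else if (x : ℕ) = a + 1 then a
      else if (x : ℕ) = b then b + 1 else if (x : ℕ) = b + 1 then b else x := by
  rw [mk4, dif_pos ⟨ha, hb⟩, Equiv.Perm.mul_apply]
  simp only [apply_ite (Fin.val (n := n)), swap_apply_nat, Fin.ext_iff, Fin.val_mk]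
  split_ifs <;> omega


lemma fixed_of_nots (w : Perm (Fin n)) {x : Fin n}
    (h1 : ¬ x < w x) (h2 : ¬ w x < x) : w x = x :=
  le_antisymm (not_lt.mp h1) (not_lt.mp h2)

lemma classify_one (w : Perm (Fin n)) (h : dep w = 1) :
    ∃ a : ℕ, a + 1 < n ∧ w = mk0 n a := by
  have hD : depD w = 1 := (dep_eq_depD w) ▸ h
  obtain ⟨p, hA, hp⟩ := sum_one (s := Finset.univ.filter fun i : Fin n => i < w i)
      (f := fun i => (w i : ℕ) - (i : ℕ)) (fun i hi => by
        simp only [Finset.mem_filter, Fin.lt_def] at hi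
        show 1 ≤ (w i : ℕ) - (i : ℕ); omega) h
  obtain ⟨q, hB, hq⟩ := sum_one (s := Finset.univ.filter fun i : Fin n => w i < i)
      (f := fun i => (i : ℕ) - (w i : ℕ)) (fun i hi => by
        simp only [Finset.mem_filter, Fin.lt_def] at hi
        show 1 ≤ (i : ℕ) - (w i : ℕ); omega) hD
  have hpmem : (p : ℕ) < (w p : ℕ) := by
    have hx : p ∈ Finset.univ.filter (fun i : Fin n => i < w i) := by
      rw [hA]; exact Finset.mem_singleton_self p
    simp only [Finset.mem_filter, Fin.lt_def] at hx
    exact hx.2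
  have hqmem : (w q : ℕ) < (q : ℕ) := by
    have hx : q ∈ Finset.univ.filter (fun i : Fin n => w i < i) := by
      rw [hB]; exact Finset.mem_singleton_self q
    simp only [Finset.mem_filter, Fin.lt_def] at hx
    exact hx.2
  have hwp : (w p : ℕ) = (p : ℕ) + 1 := by omega
  have hwq : (q : ℕ) = (w q : ℕ) + 1 := by omega
  have hfix : ∀ x : Fin n, x ≠ p → x ≠ q → w x = x := by
    intro x h1 h2
    refine fixed_of_nots w (fun hlt => ?_) (fun hlt => ?_)
    · refine h1 ?_
      have hx : x ∈ Finset.univ.filter (fun i : Fin n => i < w i) := by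
        simp only [Finset.mem_filter, Finset.mem_univ, true_and]; exact hlt
      rwa [hA, Finset.mem_singleton] at hx
    · refine h2 ?_
      have hx : x ∈ Finset.univ.filter (fun i : Fin n => w i < i) := by
        simp only [Finset.mem_filter, Finset.mem_univ, true_and]; exact hlt
      rwa [hB, Finset.mem_singleton] at hx
  have hwp_ne : w p ≠ p := by
    intro e; rw [e] at hwp; omega
  have hwq_ne : w q ≠ q := by
    intro e; rw [e] at hwq; omega
  have hwpq : w p = q := by
    by_contra hne
    exact hwp_ne (w.injective (hfix (w p) hwp_ne hne))
  have hwqp : w q = p := by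
    by_contra hne
    exact hwq_ne (w.injective (hfix (w q) hne hwq_ne))
  have hqval : (q : ℕ) = (p : ℕ) + 1 := by rw [← hwpq]; exact hwp
  have hpn : (p : ℕ) + 1 < n := by have := q.isLt; omega
  refine ⟨(p : ℕ), hpn, ?_⟩
  apply Equiv.ext
  intro x
  apply Fin.ext
  rw [mk0_apply hpn]
  by_cases hx1 : (x : ℕ) = (p : ℕ)
  · have : x = p := Fin.ext hx1
    subst this
    rw [if_pos hx1, hwp]
  · rw [if_neg hx1]
    by_cases hx2 : (x : ℕ) = (p : ℕ) + 1
    · have : x = q := Fin.ext (by omega)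
      subst this
      rw [if_pos hx2, hwqp]
    · rw [if_neg hx2]
      have hxq : x ≠ q := fun e => hx2 (by rw [e]; omega)
      rw [hfix x (fun e => hx1 (by rw [e])) hxq]

lemma fix_cases (w : Perm (Fin n)) {sA sB : Finset (Fin n)}
    (hA : Finset.univ.filter (fun i : Fin n => i < w i) = sA)
    (hB : Finset.univ.filter (fun i : Fin n => w i < i) = sB)
    {x : Fin n} (h1 : x ∉ sA) (h2 : x ∉ sB) : w x = x := by
  refine fixed_of_nots w (fun hlt => ?_) (fun hlt => ?_)
  · exact h1 (hA ▸ (by simp only [Finset.mem_filter, Finset.mem_univ, true_and]; exact hlt))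
  · exact h2 (hB ▸ (by simp only [Finset.mem_filter, Finset.mem_univ, true_and]; exact hlt))

lemma moved_cases (w : Perm (Fin n)) {sA sB : Finset (Fin n)}
    (hA : Finset.univ.filter (fun i : Fin n => i < w i) = sA)
    (hB : Finset.univ.filter (fun i : Fin n => w i < i) = sB)
    {x : Fin n} (hx : w x ≠ x) : w x ∈ sA ∪ sB := by
  by_contra hc
  rw [Finset.mem_union] at hc
  push_neg at hc
  exact hx (w.injective (fix_cases w hA hB hc.1 hc.2))

lemma caseAA (w : Perm (Fin n)) (p q : Fin n)
    (hA : Finset.univ.filter (fun i : Fin n => i < w i) = {p})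
    (hB : Finset.univ.filter (fun i : Fin n => w i < i) = {q})
    (hp : (w p : ℕ) = (p : ℕ) + 2) (hq : (q : ℕ) = (w q : ℕ) + 2) :
    ∃ a : ℕ, a + 2 < n ∧ w = mk1 n a := by
  have hfix : ∀ x : Fin n, x ≠ p → x ≠ q → w x = x := fun x h1 h2 =>
    fix_cases w hA hB (by simpa using h1) (by simpa using h2)
  have hwp_ne : w p ≠ p := fun e => by rw [e] at hp; omega
  have hwq_ne : w q ≠ q := fun e => by rw [e] at hq; omega
  have hwpq : w p = q := by
    by_contra hne
    exact hwp_ne (w.injective (hfix (w p) hwp_ne hne))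
  have hwqp : w q = p := by
    by_contra hne
    exact hwq_ne (w.injective (hfix (w q) hne hwq_ne))
  have hqv : (q : ℕ) = (p : ℕ) + 2 := by rw [← hwpq]; exact hp
  have hpn : (p : ℕ) + 2 < n := by have := q.isLt; omega
  refine ⟨(p : ℕ), hpn, ?_⟩
  apply Equiv.ext; intro x; apply Fin.ext
  rw [mk1_apply hpn]
  by_cases h1 : (x : ℕ) = (p : ℕ)
  · have e : x = p := Fin.ext h1
    subst e; rw [if_pos h1, hwpq]; omega
  · rw [if_neg h1]
    by_cases h2 : (x : ℕ) = (p : ℕ) + 2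
    · have e : x = q := Fin.ext (by omega)
      subst e; rw [if_pos h2, hwqp]
    · rw [if_neg h2]
      rw [hfix x (fun e => h1 (by rw [e])) (fun e => h2 (by rw [e]; omega))]

lemma caseAB (w : Perm (Fin n)) (p q₁ q₂ : Fin n) (hlt : (q₁ : ℕ) < (q₂ : ℕ))
    (hA : Finset.univ.filter (fun i : Fin n => i < w i) = {p})
    (hB : Finset.univ.filter (fun i : Fin n => w i < i) = {q₁, q₂})
    (hp : (w p : ℕ) = (p : ℕ) + 2)
    (hq1 : (q₁ : ℕ) = (w q₁ : ℕ) + 1) (hq2 : (q₂ : ℕ) = (w q₂ : ℕ) + 1) :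
    ∃ a : ℕ, a + 2 < n ∧ w = mk2 n a := by
  have hfix : ∀ x : Fin n, x ≠ p → x ≠ q₁ → x ≠ q₂ → w x = x := fun x h1 h2 h3 =>
    fix_cases w hA hB (by simpa using h1) (by simp [h2, h3])
  have hmov : ∀ x : Fin n, w x ≠ x → w x = p ∨ w x = q₁ ∨ w x = q₂ := by
    intro x hx
    have := moved_cases w hA hB hx
    simp [Finset.mem_union] at this
    tauto
  have hq1_ne : w q₁ ≠ q₁ := fun e => by rw [e] at hq1; omega
  have hq2_ne : w q₂ ≠ q₂ := fun e => by rw [e] at hq2; omega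
  have hp_ne : w p ≠ p := fun e => by rw [e] at hp; omega
  -- w q₁ = p
  have hwq1 : w q₁ = p := by
    rcases hmov q₁ hq1_ne with h1 | h1 | h1
    · exact h1
    · exact absurd h1 hq1_ne
    · exfalso; rw [h1] at hq1; omega
  have hq1v : (q₁ : ℕ) = (p : ℕ) + 1 := by rw [hwq1] at hq1; omega
  -- w q₂ = q₁
  have hwq2 : w q₂ = q₁ := by
    rcases hmov q₂ hq2_ne with h1 | h1 | h1
    · exfalso; rw [h1] at hq2; omega
    · exact h1
    · exact absurd h1 hq2_ne
  have hq2v : (q₂ : ℕ) = (p : ℕ) + 2 := by rw [hwq2] at hq2; omega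
  -- w p = q₂
  have hwp : w p = q₂ := by
    rcases hmov p hp_ne with h1 | h1 | h1
    · exact absurd h1 hp_ne
    · exfalso; rw [h1] at hp; omega
    · exact h1
  have hpn : (p : ℕ) + 2 < n := by have := q₂.isLt; omega
  refine ⟨(p : ℕ), hpn, ?_⟩
  apply Equiv.ext; intro x; apply Fin.ext
  rw [mk2_apply hpn]
  by_cases h1 : (x : ℕ) = (p : ℕ)
  · have e : x = p := Fin.ext h1
    subst e; rw [if_pos h1, hwp]; omega
  · rw [if_neg h1]
    by_cases h2 : (x : ℕ) = (p : ℕ) + 1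
    · have e : x = q₁ := Fin.ext (by omega)
      subst e; rw [if_pos h2, hwq1]
    · rw [if_neg h2]
      by_cases h3 : (x : ℕ) = (p : ℕ) + 2
      · have e : x = q₂ := Fin.ext (by omega)
        subst e; rw [if_pos h3, hwq2]; omega
      · rw [if_neg h3]
        rw [hfix x (fun e => h1 (by rw [e])) (fun e => h2 (by rw [e]; omega))
          (fun e => h3 (by rw [e]; omega))]

lemma caseBA (w : Perm (Fin n)) (p₁ p₂ q : Fin n) (hlt : (p₁ : ℕ) < (p₂ : ℕ))
    (hA : Finset.univ.filter (fun i : Fin n => i < w i) = {p₁, p₂})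
    (hB : Finset.univ.filter (fun i : Fin n => w i < i) = {q})
    (hp1 : (w p₁ : ℕ) = (p₁ : ℕ) + 1) (hp2 : (w p₂ : ℕ) = (p₂ : ℕ) + 1)
    (hq : (q : ℕ) = (w q : ℕ) + 2) :
    ∃ a : ℕ, a + 2 < n ∧ w = mk3 n a := by
  have hfix : ∀ x : Fin n, x ≠ p₁ → x ≠ p₂ → x ≠ q → w x = x := fun x h1 h2 h3 =>
    fix_cases w hA hB (by simp [h1, h2]) (by simpa using h3)
  have hmov : ∀ x : Fin n, w x ≠ x → w x = p₁ ∨ w x = p₂ ∨ w x = q := by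
    intro x hx
    have := moved_cases w hA hB hx
    simpa [Finset.mem_union] using this
  have hp1_ne : w p₁ ≠ p₁ := fun e => by rw [e] at hp1; omega
  have hp2_ne : w p₂ ≠ p₂ := fun e => by rw [e] at hp2; omega
  have hq_ne : w q ≠ q := fun e => by rw [e] at hq; omega
  have hwp2 : w p₂ = q := by
    rcases hmov p₂ hp2_ne with h1 | h1 | h1
    · exfalso; rw [h1] at hp2; omega
    · exact absurd h1 hp2_ne
    · exact h1
  have hqv : (q : ℕ) = (p₂ : ℕ) + 1 := by rw [← hwp2]; exact hp2
  have hwp1 : w p₁ = p₂ := by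
    rcases hmov p₁ hp1_ne with h1 | h1 | h1
    · exact absurd h1 hp1_ne
    · exact h1
    · exfalso; rw [h1] at hp1; omega
  have hp2v : (p₂ : ℕ) = (p₁ : ℕ) + 1 := by rw [← hwp1]; exact hp1
  have hwq : w q = p₁ := by
    rcases hmov q hq_ne with h1 | h1 | h1
    · exact h1
    · exfalso; rw [h1] at hq; omega
    · exact absurd h1 hq_ne
  have hpn : (p₁ : ℕ) + 2 < n := by have := q.isLt; omega
  refine ⟨(p₁ : ℕ), hpn, ?_⟩
  apply Equiv.ext; intro x; apply Fin.ext
  rw [mk3_apply hpn]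
  by_cases h1 : (x : ℕ) = (p₁ : ℕ)
  · have e : x = p₁ := Fin.ext h1
    subst e; rw [if_pos h1, hwp1]; omega
  · rw [if_neg h1]
    by_cases h2 : (x : ℕ) = (p₁ : ℕ) + 1
    · have e : x = p₂ := Fin.ext (by omega)
      subst e; rw [if_pos h2, hwp2]; omega
    · rw [if_neg h2]
      by_cases h3 : (x : ℕ) = (p₁ : ℕ) + 2
      · have e : x = q := Fin.ext (by omega)
        subst e; rw [if_pos h3, hwq]
      · rw [if_neg h3]
        rw [hfix x (fun e => h1 (by rw [e])) (fun e => h2 (by rw [e]; omega))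
          (fun e => h3 (by rw [e]; omega))]

lemma caseBB (w : Perm (Fin n)) (p₁ p₂ q₁ q₂ : Fin n)
    (hplt : (p₁ : ℕ) < (p₂ : ℕ)) (hqlt : (q₁ : ℕ) < (q₂ : ℕ))
    (hA : Finset.univ.filter (fun i : Fin n => i < w i) = {p₁, p₂})
    (hB : Finset.univ.filter (fun i : Fin n => w i < i) = {q₁, q₂})
    (hp1 : (w p₁ : ℕ) = (p₁ : ℕ) + 1) (hp2 : (w p₂ : ℕ) = (p₂ : ℕ) + 1)
    (hq1 : (q₁ : ℕ) = (w q₁ : ℕ) + 1) (hq2 : (q₂ : ℕ) = (w q₂ : ℕ) + 1) :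
    ∃ a b : ℕ, a + 2 ≤ b ∧ b + 1 < n ∧ w = mk4 n a b := by
  have hfix : ∀ x : Fin n, x ≠ p₁ → x ≠ p₂ → x ≠ q₁ → x ≠ q₂ → w x = x :=
    fun x h1 h2 h3 h4 =>
      fix_cases w hA hB (by simp [h1, h2]) (by simp [h3, h4])
  have hmov : ∀ x : Fin n, w x ≠ x → w x = p₁ ∨ w x = p₂ ∨ w x = q₁ ∨ w x = q₂ := by
    intro x hx
    have := moved_cases w hA hB hx
    simp [Finset.mem_union] at this
    tauto
  have hp1_ne : w p₁ ≠ p₁ := fun e => by rw [e] at hp1; omega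
  have hp2_ne : w p₂ ≠ p₂ := fun e => by rw [e] at hp2; omega
  have hq1_ne : w q₁ ≠ q₁ := fun e => by rw [e] at hq1; omega
  have hq2_ne : w q₂ ≠ q₂ := fun e => by rw [e] at hq2; omega
  -- distinctness of p's and q's
  have hp1q1 : p₁ ≠ q₁ := fun e => by rw [← e] at hq1; omega
  have hp1q2 : p₁ ≠ q₂ := fun e => by rw [← e] at hq2; omega
  have hp2q1 : p₂ ≠ q₁ := fun e => by rw [← e] at hq1; omega
  have hp2q2 : p₂ ≠ q₂ := fun e => by rw [← e] at hq2; omega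
  -- who maps to p₁
  set y := w.symm p₁ with hy_def
  have hy : w y = p₁ := w.apply_symm_apply p₁
  have hy_ne : w y ≠ y := by
    intro e
    have hyp : y = p₁ := by rw [← hy, e]
    rw [hyp] at hy
    exact hp1_ne hy
  have hy_mem : y = p₁ ∨ y = p₂ ∨ y = q₁ ∨ y = q₂ := by
    by_contra hc
    push_neg at hc
    exact hy_ne (hfix y hc.1 hc.2.1 hc.2.2.1 hc.2.2.2)
  have hyp1 : y ≠ p₁ := by
    intro e
    rw [e] at hy
    exact hp1_ne hy
  have hyp2 : y ≠ p₂ := by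
    intro e
    rw [e] at hy
    have : (w p₂ : ℕ) = (p₁ : ℕ) := by rw [hy]
    omega
  rcases hy_mem with e | e | e | e
  · exact absurd e hyp1
  · exact absurd e hyp2
  · -- y = q₁ : main case
    rw [e] at hy
    -- hy : w q₁ = p₁
    have hq1v : (q₁ : ℕ) = (p₁ : ℕ) + 1 := by
      have : (w q₁ : ℕ) = (p₁ : ℕ) := by rw [hy]
      omega
    have hwp1 : w p₁ = q₁ := by
      rcases hmov p₁ hp1_ne with h1 | h1 | h1 | h1
      · exact absurd h1 hp1_ne
      · exfalso
        have : (w p₁ : ℕ) = (p₂ : ℕ) := by rw [h1]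
        exact hp2q1 (Fin.ext (by omega))
      · exact h1
      · exfalso
        have : (w p₁ : ℕ) = (q₂ : ℕ) := by rw [h1]
        omega
    have hwp2 : w p₂ = q₂ := by
      rcases hmov p₂ hp2_ne with h1 | h1 | h1 | h1
      · exfalso
        have : (w p₂ : ℕ) = (p₁ : ℕ) := by rw [h1]
        omega
      · exact absurd h1 hp2_ne
      · exfalso
        have : (w p₂ : ℕ) = (q₁ : ℕ) := by rw [h1]
        omega
      · exact h1
    have hq2v : (q₂ : ℕ) = (p₂ : ℕ) + 1 := by
      have : (w p₂ : ℕ) = (q₂ : ℕ) := by rw [hwp2]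
      omega
    have hwq2 : w q₂ = p₂ := by
      rcases hmov q₂ hq2_ne with h1 | h1 | h1 | h1
      · exfalso
        have : (w q₂ : ℕ) = (p₁ : ℕ) := by rw [h1]
        omega
      · exact h1
      · exfalso
        have : (w q₂ : ℕ) = (q₁ : ℕ) := by rw [h1]
        omega
      · exact absurd h1 hq2_ne
    have hab : (p₁ : ℕ) + 2 ≤ (p₂ : ℕ) := by
      rcases (by omega : (p₂ : ℕ) = (p₁ : ℕ) + 1 ∨ (p₁ : ℕ) + 2 ≤ (p₂ : ℕ)) with h1 | h1
      · exact absurd (Fin.ext (by omega) : p₂ = q₁) hp2q1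
      · exact h1
    have hbn : (p₂ : ℕ) + 1 < n := by have := q₂.isLt; omega
    refine ⟨(p₁ : ℕ), (p₂ : ℕ), hab, hbn, ?_⟩
    apply Equiv.ext; intro x; apply Fin.ext
    rw [mk4_apply (by omega) hbn hab]
    by_cases h1 : (x : ℕ) = (p₁ : ℕ)
    · have e1 : x = p₁ := Fin.ext h1
      subst e1; rw [if_pos h1, hwp1]; omega
    · rw [if_neg h1]
      by_cases h2 : (x : ℕ) = (p₁ : ℕ) + 1
      · have e1 : x = q₁ := Fin.ext (by omega)
        subst e1; rw [if_pos h2, hy]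
      · rw [if_neg h2]
        by_cases h3 : (x : ℕ) = (p₂ : ℕ)
        · have e1 : x = p₂ := Fin.ext h3
          subst e1; rw [if_pos h3, hwp2]; omega
        · rw [if_neg h3]
          by_cases h4 : (x : ℕ) = (p₂ : ℕ) + 1
          · have e1 : x = q₂ := Fin.ext (by omega)
            subst e1; rw [if_pos h4, hwq2]
          · rw [if_neg h4]
            rw [hfix x (fun e1 => h1 (by rw [e1])) (fun e1 => h3 (by rw [e1]))
              (fun e1 => h2 (by rw [e1]; omega)) (fun e1 => h4 (by rw [e1]; omega))]
  · -- y = q₂ : impossible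
    exfalso
    rw [e] at hy
    have hq2v : (q₂ : ℕ) = (p₁ : ℕ) + 1 := by
      have : (w q₂ : ℕ) = (p₁ : ℕ) := by rw [hy]
      omega
    rcases hmov q₁ hq1_ne with h1 | h1 | h1 | h1
    · have : (w q₁ : ℕ) = (p₁ : ℕ) := by rw [h1]
      omega
    · have : (w q₁ : ℕ) = (p₂ : ℕ) := by rw [h1]
      omega
    · exact hq1_ne h1
    · have : (w q₁ : ℕ) = (q₂ : ℕ) := by rw [h1]
      omega

lemma classify_two (w : Perm (Fin n)) (h : dep w = 2) :
    (∃ a : ℕ, a + 2 < n ∧ w = mk1 n a) ∨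
    (∃ a : ℕ, a + 2 < n ∧ w = mk2 n a) ∨
    (∃ a : ℕ, a + 2 < n ∧ w = mk3 n a) ∨
    (∃ a b : ℕ, a + 2 ≤ b ∧ b + 1 < n ∧ w = mk4 n a b) := by
  have hD : depD w = 2 := (dep_eq_depD w) ▸ h
  have memA : ∀ i : Fin n, i ∈ Finset.univ.filter (fun i : Fin n => i < w i) →
      (i : ℕ) < (w i : ℕ) := by
    intro i hi
    simp only [Finset.mem_filter, Fin.lt_def] at hi
    exact hi.2
  have memB : ∀ i : Fin n, i ∈ Finset.univ.filter (fun i : Fin n => w i < i) →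
      (w i : ℕ) < (i : ℕ) := by
    intro i hi
    simp only [Finset.mem_filter, Fin.lt_def] at hi
    exact hi.2
  rcases sum_two (s := Finset.univ.filter fun i : Fin n => i < w i)
      (f := fun i => (w i : ℕ) - (i : ℕ)) (fun i hi => by
        have := memA i hi
        show 1 ≤ (w i : ℕ) - (i : ℕ); omega) h with
    ⟨p, hA, hp⟩ | ⟨p₁, p₂, hpne, hA, hpv1, hpv2⟩ <;>
  rcases sum_two (s := Finset.univ.filter fun i : Fin n => w i < i)
      (f := fun i => (i : ℕ) - (w i : ℕ)) (fun i hi => by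
        have := memB i hi
        show 1 ≤ (i : ℕ) - (w i : ℕ); omega) hD with
    ⟨q, hB, hq⟩ | ⟨q₁, q₂, hqne, hB, hqv1, hqv2⟩
  · -- AA
    have hp' : (w p : ℕ) = (p : ℕ) + 2 := by
      have := memA p (by rw [hA]; exact Finset.mem_singleton_self p)
      omega
    have hq' : (q : ℕ) = (w q : ℕ) + 2 := by
      have := memB q (by rw [hB]; exact Finset.mem_singleton_self q)
      omega
    exact Or.inl (caseAA w p q hA hB hp' hq')
  · -- AB
    have hp' : (w p : ℕ) = (p : ℕ) + 2 := by
      have := memA p (by rw [hA]; exact Finset.mem_singleton_self p)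
      omega
    have hq1' : (q₁ : ℕ) = (w q₁ : ℕ) + 1 := by
      have := memB q₁ (by rw [hB]; simp)
      omega
    have hq2' : (q₂ : ℕ) = (w q₂ : ℕ) + 1 := by
      have := memB q₂ (by rw [hB]; simp)
      omega
    have hqne' : (q₁ : ℕ) ≠ (q₂ : ℕ) := fun e => hqne (Fin.ext e)
    rcases lt_or_gt_of_ne hqne' with hlt | hlt
    · exact Or.inr (Or.inl (caseAB w p q₁ q₂ hlt hA hB hp' hq1' hq2'))
    · rw [Finset.pair_comm] at hB
      exact Or.inr (Or.inl (caseAB w p q₂ q₁ hlt hA hB hp' hq2' hq1'))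
  · -- BA
    have hq' : (q : ℕ) = (w q : ℕ) + 2 := by
      have := memB q (by rw [hB]; exact Finset.mem_singleton_self q)
      omega
    have hp1' : (w p₁ : ℕ) = (p₁ : ℕ) + 1 := by
      have := memA p₁ (by rw [hA]; simp)
      omega
    have hp2' : (w p₂ : ℕ) = (p₂ : ℕ) + 1 := by
      have := memA p₂ (by rw [hA]; simp)
      omega
    have hpne' : (p₁ : ℕ) ≠ (p₂ : ℕ) := fun e => hpne (Fin.ext e)
    rcases lt_or_gt_of_ne hpne' with hlt | hlt
    · exact Or.inr (Or.inr (Or.inl (caseBA w p₁ p₂ q hlt hA hB hp1' hp2' hq')))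
    · rw [Finset.pair_comm] at hA
      exact Or.inr (Or.inr (Or.inl (caseBA w p₂ p₁ q hlt hA hB hp2' hp1' hq')))
  · -- BB
    have hp1' : (w p₁ : ℕ) = (p₁ : ℕ) + 1 := by
      have := memA p₁ (by rw [hA]; simp)
      omega
    have hp2' : (w p₂ : ℕ) = (p₂ : ℕ) + 1 := by
      have := memA p₂ (by rw [hA]; simp)
      omega
    have hq1' : (q₁ : ℕ) = (w q₁ : ℕ) + 1 := by
      have := memB q₁ (by rw [hB]; simp)
      omega
    have hq2' : (q₂ : ℕ) = (w q₂ : ℕ) + 1 := by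
      have := memB q₂ (by rw [hB]; simp)
      omega
    have hpne' : (p₁ : ℕ) ≠ (p₂ : ℕ) := fun e => hpne (Fin.ext e)
    have hqne' : (q₁ : ℕ) ≠ (q₂ : ℕ) := fun e => hqne (Fin.ext e)
    refine Or.inr (Or.inr (Or.inr ?_))
    rcases lt_or_gt_of_ne hpne' with hplt | hplt <;>
      rcases lt_or_gt_of_ne hqne' with hqlt | hqlt
    · exact caseBB w p₁ p₂ q₁ q₂ hplt hqlt hA hB hp1' hp2' hq1' hq2'
    · rw [Finset.pair_comm q₁ q₂] at hB
      exact caseBB w p₁ p₂ q₂ q₁ hplt hqlt hA hB hp1' hp2' hq2' hq1'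
    · rw [Finset.pair_comm p₁ p₂] at hA
      exact caseBB w p₂ p₁ q₁ q₂ hplt hqlt hA hB hp2' hp1' hq1' hq2'
    · rw [Finset.pair_comm p₁ p₂] at hA
      rw [Finset.pair_comm q₁ q₂] at hB
      exact caseBB w p₂ p₁ q₂ q₁ hplt hqlt hA hB hp2' hp1' hq2' hq1'

lemma dep_mk0 {a : ℕ} (h : a + 1 < n) : dep (mk0 n a) = 1 := by
  have hfil : Finset.univ.filter (fun i : Fin n => i < (mk0 n a) i)
      = {(⟨a, by omega⟩ : Fin n)} := by
    ext x
    simp only [Finset.mem_filter, Finset.mem_univ, true_and, Finset.mem_singleton,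
      Fin.lt_def, Fin.ext_iff, Fin.val_mk, mk0_apply h]
    split_ifs <;> omega
  rw [dep, hfil, Finset.sum_singleton, mk0_apply h]
  simp only [Fin.val_mk]
  split_ifs <;> omega

lemma dep_mk1 {a : ℕ} (h : a + 2 < n) : dep (mk1 n a) = 2 := by
  have hfil : Finset.univ.filter (fun i : Fin n => i < (mk1 n a) i)
      = {(⟨a, by omega⟩ : Fin n)} := by
    ext x
    simp only [Finset.mem_filter, Finset.mem_univ, true_and, Finset.mem_singleton,
      Fin.lt_def, Fin.ext_iff, Fin.val_mk, mk1_apply h]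
    split_ifs <;> omega
  rw [dep, hfil, Finset.sum_singleton, mk1_apply h]
  simp only [Fin.val_mk]
  split_ifs <;> omega

lemma dep_mk2 {a : ℕ} (h : a + 2 < n) : dep (mk2 n a) = 2 := by
  have hfil : Finset.univ.filter (fun i : Fin n => i < (mk2 n a) i)
      = {(⟨a, by omega⟩ : Fin n)} := by
    ext x
    simp only [Finset.mem_filter, Finset.mem_univ, true_and, Finset.mem_singleton,
      Fin.lt_def, Fin.ext_iff, Fin.val_mk, mk2_apply h]
    split_ifs <;> omega
  rw [dep, hfil, Finset.sum_singleton, mk2_apply h]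
  simp only [Fin.val_mk]
  split_ifs <;> omega

lemma dep_mk3 {a : ℕ} (h : a + 2 < n) : dep (mk3 n a) = 2 := by
  have hne : (⟨a, by omega⟩ : Fin n) ≠ ⟨a + 1, by omega⟩ := by
    simp [Fin.ext_iff]
  have hfil : Finset.univ.filter (fun i : Fin n => i < (mk3 n a) i)
      = {(⟨a, by omega⟩ : Fin n), ⟨a + 1, by omega⟩} := by
    ext x
    simp only [Finset.mem_filter, Finset.mem_univ, true_and, Finset.mem_insert,
      Finset.mem_singleton, Fin.lt_def, Fin.ext_iff, Fin.val_mk, mk3_apply h]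
    split_ifs <;> omega
  rw [dep, hfil, Finset.sum_pair hne, mk3_apply h, mk3_apply h]
  simp only [Fin.val_mk]
  split_ifs <;> omega

lemma dep_mk4 {a b : ℕ} (hab : a + 2 ≤ b) (hb : b + 1 < n) : dep (mk4 n a b) = 2 := by
  have ha : a + 1 < n := by omega
  have hne : (⟨a, by omega⟩ : Fin n) ≠ ⟨b, by omega⟩ := by
    simp [Fin.ext_iff]; omega
  have hfil : Finset.univ.filter (fun i : Fin n => i < (mk4 n a b) i)
      = {(⟨a, by omega⟩ : Fin n), ⟨b, by omega⟩} := by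
    ext x
    simp only [Finset.mem_filter, Finset.mem_univ, true_and, Finset.mem_insert,
      Finset.mem_singleton, Fin.lt_def, Fin.ext_iff, Fin.val_mk, mk4_apply ha hb hab]
    split_ifs <;> omega
  rw [dep, hfil, Finset.sum_pair hne, mk4_apply ha hb hab, mk4_apply ha hb hab]
  simp only [Fin.val_mk]
  split_ifs <;> omega

lemma eq_apply {w1 w2 : Perm (Fin n)} (h : w1 = w2) (x : Fin n) :
    (w1 x : ℕ) = (w2 x : ℕ) := by rw [h]

lemma mk0_inj {a b : ℕ} (ha : a + 1 < n) (hb : b + 1 < n) (h : mk0 n a = mk0 n b) :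
    a = b := by
  have h1 := eq_apply h ⟨a, by omega⟩
  simp only [mk0_apply ha, mk0_apply hb, Fin.val_mk] at h1
  split_ifs at h1 <;> omega

lemma mk1_inj {a b : ℕ} (ha : a + 2 < n) (hb : b + 2 < n) (h : mk1 n a = mk1 n b) :
    a = b := by
  have h1 := eq_apply h ⟨a, by omega⟩
  simp only [mk1_apply ha, mk1_apply hb, Fin.val_mk] at h1
  split_ifs at h1 <;> omega

lemma mk2_inj {a b : ℕ} (ha : a + 2 < n) (hb : b + 2 < n) (h : mk2 n a = mk2 n b) :
    a = b := by
  have h1 := eq_apply h ⟨a, by omega⟩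
  simp only [mk2_apply ha, mk2_apply hb, Fin.val_mk] at h1
  split_ifs at h1 <;> omega

lemma mk3_inj {a b : ℕ} (ha : a + 2 < n) (hb : b + 2 < n) (h : mk3 n a = mk3 n b) :
    a = b := by
  have h1 := eq_apply h ⟨a, by omega⟩
  have h2 := eq_apply h ⟨a + 1, by omega⟩
  simp only [mk3_apply ha, mk3_apply hb, Fin.val_mk] at h1 h2
  split_ifs at h1 h2 <;> omega

lemma mk4_inj {a b a' b' : ℕ} (hab : a + 2 ≤ b) (hb : b + 1 < n)
    (hab' : a' + 2 ≤ b') (hb' : b' + 1 < n) (h : mk4 n a b = mk4 n a' b') :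
    a = a' ∧ b = b' := by
  have h1 := eq_apply h ⟨a, by omega⟩
  have h2 := eq_apply h ⟨b, by omega⟩
  simp only [mk4_apply (by omega) hb hab, mk4_apply (by omega) hb' hab', Fin.val_mk,
    eq_self_iff_true, if_true] at h1 h2
  split_ifs at h1 h2 <;> omega

lemma mk1_ne_mk2 {a b : ℕ} (ha : a + 2 < n) (hb : b + 2 < n) : mk1 n a ≠ mk2 n b := by
  intro h
  have h1 := eq_apply h ⟨b + 1, by omega⟩
  simp only [mk1_apply ha, mk2_apply hb, Fin.val_mk] at h1
  split_ifs at h1 <;> omega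

lemma mk1_ne_mk3 {a b : ℕ} (ha : a + 2 < n) (hb : b + 2 < n) : mk1 n a ≠ mk3 n b := by
  intro h
  have h1 := eq_apply h ⟨b, by omega⟩
  simp only [mk1_apply ha, mk3_apply hb, Fin.val_mk] at h1
  split_ifs at h1 <;> omega

lemma mk1_ne_mk4 {a c b : ℕ} (ha : a + 2 < n) (hcb : c + 2 ≤ b) (hb : b + 1 < n) :
    mk1 n a ≠ mk4 n c b := by
  intro h
  have h1 := eq_apply h ⟨c, by omega⟩
  simp only [mk1_apply ha, mk4_apply (by omega) hb hcb, Fin.val_mk] at h1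
  split_ifs at h1 <;> omega

lemma mk2_ne_mk3 {a b : ℕ} (ha : a + 2 < n) (hb : b + 2 < n) : mk2 n a ≠ mk3 n b := by
  intro h
  have h1 := eq_apply h ⟨a, by omega⟩
  simp only [mk2_apply ha, mk3_apply hb, Fin.val_mk] at h1
  split_ifs at h1 <;> omega

lemma mk2_ne_mk4 {a c b : ℕ} (ha : a + 2 < n) (hcb : c + 2 ≤ b) (hb : b + 1 < n) :
    mk2 n a ≠ mk4 n c b := by
  intro h
  have h1 := eq_apply h ⟨a, by omega⟩
  simp only [mk2_apply ha, mk4_apply (by omega) hb hcb, Fin.val_mk] at h1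
  split_ifs at h1 <;> omega

lemma mk3_ne_mk4 {a c b : ℕ} (ha : a + 2 < n) (hcb : c + 2 ≤ b) (hb : b + 1 < n) :
    mk3 n a ≠ mk4 n c b := by
  intro h
  have h1 := eq_apply h ⟨a, by omega⟩
  have h2 := eq_apply h ⟨a + 1, by omega⟩
  simp only [mk3_apply ha, mk4_apply (by omega) hb hcb, Fin.val_mk] at h1 h2
  split_ifs at h1 h2 <;> omega

lemma two_mul_choose_two (m : ℕ) : 2 * Nat.choose m 2 = m * (m - 1) := by
  induction m with
  | zero => rfl
  | succ m ih =>
    rw [Nat.choose_succ_succ, Nat.mul_add, ih, Nat.choose_one_right]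
    cases m with
    | zero => rfl
    | succ k =>
      simp only [Nat.succ_sub_one]
      ring

lemma sum_pred_eq (k : ℕ) :
    2 * (∑ b ∈ Finset.range (k + 1), (b - 1)) = k * (k - 1) := by
  induction k with
  | zero => rfl
  | succ k ih =>
    rw [Finset.sum_range_succ, Nat.mul_add, ih]
    have e : k + 1 - 1 = k := by omega
    rw [e]
    cases k with
    | zero => rfl
    | succ j =>
      have e2 : j + 1 - 1 = j := by omega
      rw [e2]
      ring

lemma two_mul_sum_pred (m : ℕ) :
    2 * (∑ b ∈ Finset.range m, (b - 1)) = (m - 1) * (m - 2) := by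
  cases m with
  | zero => rfl
  | succ k =>
    have e1 : k + 1 - 1 = k := by omega
    have e2 : k + 1 - 2 = k - 1 := by omega
    rw [e1, e2]
    exact sum_pred_eq k

lemma part1 :
    (Finset.univ.filter (fun w : Equiv.Perm (Fin n) => dep w = 1)).card = n - 1 := by
  have hset : Finset.univ.filter (fun w : Equiv.Perm (Fin n) => dep w = 1)
      = (Finset.range (n - 1)).image (mk0 n) := by
    ext w
    simp only [Finset.mem_filter, Finset.mem_univ, true_and, Finset.mem_image,
      Finset.mem_range]
    constructor
    · intro h
      obtain ⟨a, ha, rfl⟩ := classify_one w h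
      exact ⟨a, by omega, rfl⟩
    · rintro ⟨a, ha, rfl⟩
      exact dep_mk0 (by omega)
  rw [hset, Finset.card_image_of_injOn, Finset.card_range]
  intro a ha b hb hab
  simp only [Finset.mem_coe, Finset.mem_range] at ha hb
  exact mk0_inj (by omega) (by omega) hab

lemma part2 :
    (Finset.univ.filter (fun w : Equiv.Perm (Fin n) => dep w = 2)).card
      = Nat.choose (n - 2) 2 + 3 * (n - 2) := by
  classical
  set Sig : Finset (Σ _ : ℕ, ℕ) :=
    (Finset.range (n - 1)).sigma (fun b => Finset.range (b - 1)) with hSig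
  have hmemsig : ∀ p : Σ _ : ℕ, ℕ, p ∈ Sig ↔ (p.2 + 2 ≤ p.1 ∧ p.1 + 1 < n) := by
    intro p
    rw [hSig, Finset.mem_sigma]
    simp only [Finset.mem_range]
    omega
  set F1 := (Finset.range (n - 2)).image (mk1 n) with hF1
  set F2 := (Finset.range (n - 2)).image (mk2 n) with hF2
  set F3 := (Finset.range (n - 2)).image (mk3 n) with hF3
  set F4 := Sig.image (fun p : Σ _ : ℕ, ℕ => mk4 n p.2 p.1) with hF4
  have hset : Finset.univ.filter (fun w : Equiv.Perm (Fin n) => dep w = 2)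
      = F1 ∪ F2 ∪ F3 ∪ F4 := by
    ext w
    simp only [Finset.mem_filter, Finset.mem_univ, true_and, Finset.mem_union]
    constructor
    · intro h
      rcases classify_two w h with ⟨a, ha, rfl⟩ | ⟨a, ha, rfl⟩ | ⟨a, ha, rfl⟩ |
        ⟨a, b, hab, hb, rfl⟩
      · exact Or.inl (Or.inl (Or.inl (Finset.mem_image.mpr
          ⟨a, Finset.mem_range.mpr (by omega), rfl⟩)))
      · exact Or.inl (Or.inl (Or.inr (Finset.mem_image.mpr
          ⟨a, Finset.mem_range.mpr (by omega), rfl⟩)))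
      · exact Or.inl (Or.inr (Finset.mem_image.mpr
          ⟨a, Finset.mem_range.mpr (by omega), rfl⟩))
      · exact Or.inr (Finset.mem_image.mpr
          ⟨⟨b, a⟩, (hmemsig ⟨b, a⟩).mpr ⟨hab, hb⟩, rfl⟩)
    · rintro ((( hw | hw ) | hw ) | hw)
      · obtain ⟨a, ha, rfl⟩ := Finset.mem_image.mp hw
        exact dep_mk1 (by have := Finset.mem_range.mp ha; omega)
      · obtain ⟨a, ha, rfl⟩ := Finset.mem_image.mp hw
        exact dep_mk2 (by have := Finset.mem_range.mp ha; omega)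
      · obtain ⟨a, ha, rfl⟩ := Finset.mem_image.mp hw
        exact dep_mk3 (by have := Finset.mem_range.mp ha; omega)
      · obtain ⟨p, hp, rfl⟩ := Finset.mem_image.mp hw
        obtain ⟨h1, h2⟩ := (hmemsig p).mp hp
        exact dep_mk4 h1 h2
  have hc1 : F1.card = n - 2 := by
    rw [hF1, Finset.card_image_of_injOn, Finset.card_range]
    intro a ha b hb hab
    simp only [Finset.mem_coe, Finset.mem_range] at ha hb
    exact mk1_inj (by omega) (by omega) hab
  have hc2 : F2.card = n - 2 := by
    rw [hF2, Finset.card_image_of_injOn, Finset.card_range]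
    intro a ha b hb hab
    simp only [Finset.mem_coe, Finset.mem_range] at ha hb
    exact mk2_inj (by omega) (by omega) hab
  have hc3 : F3.card = n - 2 := by
    rw [hF3, Finset.card_image_of_injOn, Finset.card_range]
    intro a ha b hb hab
    simp only [Finset.mem_coe, Finset.mem_range] at ha hb
    exact mk3_inj (by omega) (by omega) hab
  have hc4 : F4.card = Nat.choose (n - 2) 2 := by
    rw [hF4, Finset.card_image_of_injOn]
    · have hcs : Sig.card = ∑ b ∈ Finset.range (n - 1), (b - 1) := by
        rw [hSig, Finset.card_sigma]
        exact Finset.sum_congr rfl (fun b _ => Finset.card_range _)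
      have h1 := two_mul_sum_pred (n - 1)
      have h2 := two_mul_choose_two (n - 2)
      have e1 : n - 1 - 1 = n - 2 := by omega
      have e2 : n - 1 - 2 = n - 2 - 1 := by omega
      rw [e1, e2] at h1
      omega
    · intro p hp q hq he
      simp only [Finset.mem_coe] at hp hq
      obtain ⟨hp1, hp2⟩ := (hmemsig p).mp hp
      obtain ⟨hq1, hq2⟩ := (hmemsig q).mp hq
      obtain ⟨e1, e2⟩ := mk4_inj hp1 hp2 hq1 hq2 he
      rcases p with ⟨pb, pa⟩
      rcases q with ⟨qb, qa⟩
      simp only at e1 e2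
      subst e1; subst e2; rfl
  -- disjointness
  have d12 : Disjoint F1 F2 := by
    rw [Finset.disjoint_left]
    rintro w hw1 hw2
    obtain ⟨a, ha, rfl⟩ := Finset.mem_image.mp hw1
    obtain ⟨b, hb, he⟩ := Finset.mem_image.mp hw2
    exact mk1_ne_mk2 (by have := Finset.mem_range.mp ha; omega)
      (by have := Finset.mem_range.mp hb; omega) he.symm
  have d13 : Disjoint F1 F3 := by
    rw [Finset.disjoint_left]
    rintro w hw1 hw2
    obtain ⟨a, ha, rfl⟩ := Finset.mem_image.mp hw1
    obtain ⟨b, hb, he⟩ := Finset.mem_image.mp hw2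
    exact mk1_ne_mk3 (by have := Finset.mem_range.mp ha; omega)
      (by have := Finset.mem_range.mp hb; omega) he.symm
  have d23 : Disjoint F2 F3 := by
    rw [Finset.disjoint_left]
    rintro w hw1 hw2
    obtain ⟨a, ha, rfl⟩ := Finset.mem_image.mp hw1
    obtain ⟨b, hb, he⟩ := Finset.mem_image.mp hw2
    exact mk2_ne_mk3 (by have := Finset.mem_range.mp ha; omega)
      (by have := Finset.mem_range.mp hb; omega) he.symm
  have d14 : Disjoint F1 F4 := by
    rw [Finset.disjoint_left]
    rintro w hw1 hw2
    obtain ⟨a, ha, rfl⟩ := Finset.mem_image.mp hw1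
    obtain ⟨p, hp, he⟩ := Finset.mem_image.mp hw2
    obtain ⟨hp1, hp2⟩ := (hmemsig p).mp hp
    exact mk1_ne_mk4 (by have := Finset.mem_range.mp ha; omega) hp1 hp2 he.symm
  have d24 : Disjoint F2 F4 := by
    rw [Finset.disjoint_left]
    rintro w hw1 hw2
    obtain ⟨a, ha, rfl⟩ := Finset.mem_image.mp hw1
    obtain ⟨p, hp, he⟩ := Finset.mem_image.mp hw2
    obtain ⟨hp1, hp2⟩ := (hmemsig p).mp hp
    exact mk2_ne_mk4 (by have := Finset.mem_range.mp ha; omega) hp1 hp2 he.symm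
  have d34 : Disjoint F3 F4 := by
    rw [Finset.disjoint_left]
    rintro w hw1 hw2
    obtain ⟨a, ha, rfl⟩ := Finset.mem_image.mp hw1
    obtain ⟨p, hp, he⟩ := Finset.mem_image.mp hw2
    obtain ⟨hp1, hp2⟩ := (hmemsig p).mp hp
    exact mk3_ne_mk4 (by have := Finset.mem_range.mp ha; omega) hp1 hp2 he.symm
  rw [hset]
  rw [Finset.card_union_of_disjoint (by
    refine Finset.disjoint_union_left.mpr ⟨Finset.disjoint_union_left.mpr ⟨d14, d24⟩, d34⟩)]
  rw [Finset.card_union_of_disjoint (Finset.disjoint_union_left.mpr ⟨d13, d23⟩)]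
  rw [Finset.card_union_of_disjoint d12]
  rw [hc1, hc2, hc3, hc4]
  omega

end DepTmp

/-- For `n ≥ 1` there are `n - 1` permutations of `{1,…,n}` of depth `1`,
and for `n ≥ 2` there are `C(n-2,2) + 3(n-2)` permutations of depth `2`. -/
theorem card_depth_one_and_two (n : ℕ) :
    (1 ≤ n →
      (Finset.univ.filter (fun w : Equiv.Perm (Fin n) => dep w = 1)).card = n - 1) ∧
    (2 ≤ n →
      (Finset.univ.filter (fun w : Equiv.Perm (Fin n) => dep w = 2)).card
        = Nat.choose (n - 2) 2 + 3 * (n - 2)) :=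
  ⟨fun _ => DepTmp.part1, fun _ => DepTmp.part2⟩
end
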